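/- arXiv:2404.04794 — 5 statements merged into one kernel-verified Lean document; each statement's English description precedes it below -/
import Mathlib

section
/- If S = p(Z) = P(T=1 | Z) is the propensity score, then conditional on S, the treatment indicator T is independent of the covariates Z, i.e., T ⊥ Z | S. -/
open MeasureTheory

/-- If `S = p(Z) = P(T = 1 ∣ Z)` is the propensity score, then conditional on `S`,
the treatment indicator `T` is independent of the covariates `Z`: `T ⊥ Z ∣ S`. -/
theorem propensity_score_balancing
    {Ω : Type*} [MeasurableSpace Ω] (μ : Measure Ω) [IsProbabilityMeasure μ]
    {M : ℕ} (Z : Ω → (Fin M → ℝ)) (hZ : Measurable Z)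
    (T : Ω → ℝ) (hT : Measurable T) (hT01 : ∀ ω, T ω = 0 ∨ T ω = 1)
    (p : Ω → ℝ) (hp : p = μ[T | MeasurableSpace.comap Z inferInstance])
    (mS : MeasurableSpace Ω) (hmS : mS = MeasurableSpace.comap p inferInstance) :
    ∀ f : (Fin M → ℝ) → ℝ, Measurable f → (∃ C, ∀ x, |f x| ≤ C) →
      μ[fun ω => T ω * f (Z ω) | mS]
        =ᵐ[μ] fun ω => (μ[T | mS]) ω * (μ[fun ω => f (Z ω) | mS]) ω := by
  rename_i mΩ hPM
  intro f hf ⟨C, hC⟩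
  set mZ : MeasurableSpace Ω := MeasurableSpace.comap Z inferInstance with hmZ
  have hmZ_le : mZ ≤ mΩ := hZ.comap_le
  -- p is mZ-strongly measurable
  have hp_mZ : StronglyMeasurable[mZ] p := hp ▸ stronglyMeasurable_condExp
  have hmS_le_mZ : mS ≤ mZ := hmS ▸ Measurable.comap_le hp_mZ.measurable
  have hmS_le : mS ≤ mΩ := hmS_le_mZ.trans hmZ_le
  -- p is mS-strongly measurable
  have hp_mS : StronglyMeasurable[mS] p :=
    Measurable.stronglyMeasurable (by rw [hmS]; exact measurable_iff_comap_le.mpr le_rfl)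
  -- integrability facts
  have hT_bdd : ∀ ω, |T ω| ≤ 1 := by
    intro ω; rcases hT01 ω with h | h <;> simp [h]
  have hT_int : Integrable T μ :=
    (integrable_const (1 : ℝ)).mono' hT.aestronglyMeasurable
      (Filter.Eventually.of_forall hT_bdd)
  have hp_int : Integrable p μ := hp ▸ integrable_condExp
  have hfZ_meas : Measurable[mΩ] fun ω => f (Z ω) := hf.comp hZ
  have hfZ_int : Integrable (fun ω => f (Z ω)) μ :=
    (integrable_const C).mono' hfZ_meas.aestronglyMeasurable
      (Filter.Eventually.of_forall fun ω => hC (Z ω))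
  have hTf_int : Integrable (fun ω => f (Z ω) * T ω) μ :=
    (integrable_const (C * 1)).mono' (hfZ_meas.mul hT).aestronglyMeasurable
      (Filter.Eventually.of_forall fun ω => by
        rw [Real.norm_eq_abs, abs_mul]
        exact mul_le_mul (hC (Z ω)) (hT_bdd ω) (abs_nonneg _)
          (le_trans (abs_nonneg _) (hC (Z ω))))
  have hfZp_int : Integrable (fun ω => p ω * f (Z ω)) μ :=
    hp_int.bdd_mul hfZ_meas.aestronglyMeasurable
      (c := C) (Filter.Eventually.of_forall fun ω => hC (Z ω)) |>.congr
      (Filter.Eventually.of_forall fun ω => mul_comm _ _)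
  -- Step 1: E[T | mS] =ᵐ p
  have hTS : μ[T | mS] =ᵐ[μ] p := by
    have h1 : μ[μ[T | mZ] | mS] =ᵐ[μ] μ[T | mS] := condExp_condExp_of_le hmS_le_mZ hmZ_le
    have h2 : μ[μ[T | mZ] | mS] = μ[p | mS] := by rw [hp]
    have h3 : μ[p | mS] = p := condExp_of_stronglyMeasurable hmS_le hp_mS hp_int
    calc μ[T | mS] =ᵐ[μ] μ[μ[T | mZ] | mS] := h1.symm
      _ = p := by rw [h2, h3]
  -- Step 2: E[T f(Z) | mZ] =ᵐ f(Z) * p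
  have hfZ_mZ : StronglyMeasurable[mZ] fun ω => f (Z ω) :=
    (hf.comp (comap_measurable Z)).stronglyMeasurable
  have step2 : μ[fun ω => T ω * f (Z ω) | mZ] =ᵐ[μ] fun ω => f (Z ω) * p ω := by
    have heq : (fun ω => T ω * f (Z ω)) = (fun ω => f (Z ω)) * T := by
      funext ω; simp [mul_comm]
    rw [heq]
    have := condExp_mul_of_stronglyMeasurable_left (μ := μ) hfZ_mZ (hTf_int.congr ?_) hT_int
    · refine this.trans ?_
      rw [hp]
      exact Filter.EventuallyEq.rfl
    · exact Filter.Eventually.of_forall fun ω => rfl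
  -- Step 3: put things together
  have step3 : μ[fun ω => T ω * f (Z ω) | mS] =ᵐ[μ] fun ω => p ω * (μ[fun ω => f (Z ω) | mS]) ω := by
    have h1 : μ[μ[fun ω => T ω * f (Z ω) | mZ] | mS] =ᵐ[μ] μ[fun ω => T ω * f (Z ω) | mS] :=
      condExp_condExp_of_le hmS_le_mZ hmZ_le
    have h2 : μ[μ[fun ω => T ω * f (Z ω) | mZ] | mS]
        =ᵐ[μ] μ[fun ω => f (Z ω) * p ω | mS] := condExp_congr_ae step2
    have h3 : μ[fun ω => f (Z ω) * p ω | mS]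
        =ᵐ[μ] fun ω => p ω * (μ[fun ω => f (Z ω) | mS]) ω := by
      have heq : (fun ω => f (Z ω) * p ω) = p * fun ω => f (Z ω) := by
        funext ω; simp [mul_comm]
      rw [heq]
      exact condExp_mul_of_stronglyMeasurable_left hp_mS
        (hfZp_int.congr (Filter.Eventually.of_forall fun ω => rfl)) hfZ_int
    exact h1.symm.trans (h2.trans h3)
  refine step3.trans ?_
  filter_upwards [hTS] with ω hω
  rw [hω]
end

section
/- If a function S = S(Z) taking values in (0,1) satisfies (1) T ⊥ Z | S and (2) S = E[T | S] almost surely, then S equals the propensity score p(Z) = E[T | Z] almost surely. -/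
open MeasureTheory

/-! By the pull-out property, balance gives `E[T 1{Z ∈ A} ∣ S] = E[E[T ∣ S] 1{Z ∈ A} ∣ S]`.
Taking expectations, `E[T ∣ S]` has the same integral as `T` over every event `{Z ∈ A}`; being
`σ(Z)`-measurable, it is therefore `E[T ∣ Z]`. Calibration identifies `E[T ∣ S]` with `S`. -/

theorem condExp_ae_eq_condExp_of_condExp_mul_indicator {Ω : Type*} {m₁ m₂ m₀ : MeasurableSpace Ω}
    {μ : Measure Ω} [IsFiniteMeasure μ] (hm₁₂ : m₁ ≤ m₂) (hm₂ : m₂ ≤ m₀) {T : Ω → ℝ}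
    (hT : Integrable T μ)
    (h : ∀ s, MeasurableSet[m₂] s →
      μ[T * s.indicator 1 | m₁] =ᵐ[μ] μ[T | m₁] * μ[s.indicator 1 | m₁]) :
    μ[T | m₁] =ᵐ[μ] μ[T | m₂] := by
  have hm₁ := hm₁₂.trans hm₂
  refine ae_eq_condExp_of_forall_setIntegral_eq hm₂ hT
    (fun _ _ _ => integrable_condExp.integrableOn) (fun s hs _ => ?_)
    (stronglyMeasurable_condExp.mono hm₁₂).aestronglyMeasurable
  have hs₀ : MeasurableSet s := hm₂ s hs
  have hind_int : Integrable (s.indicator (1 : Ω → ℝ)) μ :=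
    (integrable_const 1).indicator hs₀
  have mul_indicator_one : ∀ f : Ω → ℝ, f * s.indicator 1 = s.indicator f := fun f => by
    ext ω; by_cases hω : ω ∈ s <;> simp [hω]
  have pull_out : μ[μ[T | m₁] * s.indicator 1 | m₁] =ᵐ[μ] μ[T | m₁] * μ[s.indicator 1 | m₁] :=
    condExp_mul_of_stronglyMeasurable_left stronglyMeasurable_condExp
      (by rw [mul_indicator_one]; exact integrable_condExp.indicator hs₀) hind_int
  calc ∫ ω in s, (μ[T | m₁]) ω ∂μ
      = ∫ ω, (μ[T | m₁] * s.indicator 1 : Ω → ℝ) ω ∂μ := by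
        rw [mul_indicator_one, integral_indicator hs₀]
    _ = ∫ ω, (μ[μ[T | m₁] * s.indicator 1 | m₁]) ω ∂μ := (integral_condExp hm₁).symm
    _ = ∫ ω, (μ[T * s.indicator 1 | m₁]) ω ∂μ := integral_congr_ae (pull_out.trans (h s hs).symm)
    _ = ∫ ω, (T * s.indicator 1 : Ω → ℝ) ω ∂μ := integral_condExp hm₁
    _ = ∫ ω in s, T ω ∂μ := by rw [mul_indicator_one, integral_indicator hs₀]

/-- If `S = S(Z)` takes values in `(0,1)`, satisfies local balance `T ⊥ Z ∣ S` and local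
calibration `S = E[T ∣ S]` a.s., then `S` equals the propensity score `E[T ∣ Z]` a.s. -/
theorem conditions_imply_propensity_score
    {Ω : Type*} [MeasurableSpace Ω] (μ : Measure Ω) [IsProbabilityMeasure μ]
    {M : ℕ} (Z : Ω → (Fin M → ℝ)) (hZ : Measurable Z)
    (T : Ω → ℝ) (hT : Measurable T) (hT01 : ∀ ω, T ω = 0 ∨ T ω = 1)
    (S : Ω → ℝ) (S0 : (Fin M → ℝ) → ℝ) (hS0 : Measurable S0)
    (hSZ : S = fun ω => S0 (Z ω))
    (hS01 : ∀ ω, S ω ∈ Set.Ioo (0 : ℝ) 1)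
    (mS : MeasurableSpace Ω) (hmS : mS = MeasurableSpace.comap S inferInstance)
    (hbal : ∀ f : (Fin M → ℝ) → ℝ, Measurable f → (∃ C, ∀ x, |f x| ≤ C) →
      μ[fun ω => T ω * f (Z ω) | mS]
        =ᵐ[μ] fun ω => (μ[T | mS]) ω * (μ[fun ω => f (Z ω) | mS]) ω)
    (hcal : S =ᵐ[μ] μ[T | mS]) :
    S =ᵐ[μ] μ[T | MeasurableSpace.comap Z inferInstance] := by
  have hmSZ : mS ≤ MeasurableSpace.comap Z inferInstance := by
    subst hmS hSZ
    exact (hS0.comp (comap_measurable Z)).comap_le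
  have hTint : Integrable T μ :=
    .of_bound hT.aestronglyMeasurable 1 <| .of_forall fun ω => by
      rcases hT01 ω with h | h <;> simp [h]
  refine hcal.trans <| condExp_ae_eq_condExp_of_condExp_mul_indicator hmSZ hZ.comap_le hTint ?_
  rintro _ ⟨A, hA, rfl⟩
  exact hbal (A.indicator 1) (measurable_const.indicator hA)
    ⟨1, fun x => by by_cases hx : x ∈ A <;> simp [hx]⟩
end

section
/- With the true propensity score, E[T W Z | p] = E[(1-T) W Z | p] = E[Z | p] almost surely, i.e., local balance holds. -/
/-!
On `{T = 1}` the weight is `1 / p`, so `T W Z = (T / p) • Z`. As `Z` and `p = E[T ∣ Z]` are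
`σ(Z)`-measurable, pulling them out gives `E[(T / p) • Z ∣ Z] = (E[T ∣ Z] / p) • Z = Z`, and
conditioning further on `σ(p) ⊆ σ(Z)` yields `E[T W Z ∣ p] = E[Z ∣ p]`. The untreated side is
the same argument for `1 - T`, whose conditional mean given `Z` is `1 - p`.
-/

open MeasureTheory

lemma pi_norm_le_sum_abs {ι : Type*} [Fintype ι] (x : ι → ℝ) : ‖x‖ ≤ ∑ i, |x i| :=
  (pi_norm_le_iff_of_nonneg (by positivity)).mpr fun i =>
    Finset.single_le_sum (f := fun j => |x j|) (fun j _ => abs_nonneg _) (Finset.mem_univ i)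

lemma mul_propensity_weight_eq_div {t a : ℝ} (ht : t = 0 ∨ t = 1) :
    t * (1 / (t * a + (1 - t) * (1 - a))) = t / a ∧
      (1 - t) * (1 / (t * a + (1 - t) * (1 - a))) = (1 - t) / (1 - a) := by
  rcases ht with rfl | rfl <;> simp

section

variable {Ω E : Type*} {m m₀ : MeasurableSpace Ω} {μ : Measure Ω}
  [NormedAddCommGroup E] [NormedSpace ℝ E]

lemma integrable_div_smul_of_abs_le_one {S q g : Ω → ℝ} {Y : Ω → E}
    (hS : AEStronglyMeasurable S μ) (hS1 : ∀ ω, |S ω| ≤ 1) (hq : AEStronglyMeasurable q μ)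
    (hq0 : ∀ᵐ ω ∂μ, 0 < q ω) (hY : AEStronglyMeasurable Y μ) (hYg : ∀ ω, ‖Y ω‖ ≤ g ω)
    (hg : Integrable (fun ω => g ω / q ω) μ) :
    Integrable (fun ω => (S ω / q ω) • Y ω) μ := by
  refine hg.mono' ((hS.div₀ hq).smul hY) ?_
  filter_upwards [hq0] with ω hω
  rw [norm_smul, Real.norm_eq_abs, abs_div, abs_of_pos hω, div_mul_eq_mul_div]
  gcongr
  calc |S ω| * ‖Y ω‖ ≤ 1 * g ω :=
        mul_le_mul (hS1 ω) (hYg ω) (norm_nonneg _) zero_le_one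
    _ = g ω := one_mul _

lemma condExp_const_sub [IsFiniteMeasure μ] [CompleteSpace E] (hm : m ≤ m₀) {f : Ω → E}
    (hf : Integrable f μ) (c : E) :
    μ[fun ω => c - f ω | m] =ᵐ[μ] fun ω => c - μ[f | m] ω := by
  have := condExp_sub (integrable_const c) hf m
  rwa [condExp_const hm] at this

variable [CompleteSpace E]

lemma condExp_div_smul_eq {S q : Ω → ℝ} {Y : Ω → E} (hS : Integrable S μ)
    (hq : μ[S | m] =ᵐ[μ] q) (hqm : AEStronglyMeasurable[m] q μ) (hq0 : ∀ᵐ ω ∂μ, q ω ≠ 0)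
    (hY : AEStronglyMeasurable[m] Y μ) (hint : Integrable (fun ω => (S ω / q ω) • Y ω) μ) :
    μ[fun ω => (S ω / q ω) • Y ω | m] =ᵐ[μ] Y := by
  have hsplit : (fun ω => (S ω / q ω) • Y ω) = S • fun ω => (q ω)⁻¹ • Y ω := by
    ext ω; simp only [Pi.smul_apply', smul_smul, div_eq_mul_inv]
  rw [hsplit] at hint ⊢
  filter_upwards [condExp_smul_of_aestronglyMeasurable_right hS hint (hqm.inv₀.smul hY), hq, hq0]
    with ω hpull hqω hq0ω
  rw [hpull, Pi.smul_apply', hqω, smul_smul, mul_inv_cancel₀ hq0ω, one_smul]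

lemma condExp_div_smul_eq_condExp_of_le {m' : MeasurableSpace Ω} (hm' : m' ≤ m) (hm : m ≤ m₀)
    [SigmaFinite (μ.trim hm)] {S q : Ω → ℝ} {Y : Ω → E} (hS : Integrable S μ)
    (hq : μ[S | m] =ᵐ[μ] q) (hqm : AEStronglyMeasurable[m] q μ) (hq0 : ∀ᵐ ω ∂μ, q ω ≠ 0)
    (hY : AEStronglyMeasurable[m] Y μ) (hint : Integrable (fun ω => (S ω / q ω) • Y ω) μ) :
    μ[fun ω => (S ω / q ω) • Y ω | m'] =ᵐ[μ] μ[Y | m'] :=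
  (condExp_condExp_of_le hm' hm).symm.trans
    (condExp_congr_ae (condExp_div_smul_eq hS hq hqm hq0 hY hint))

end

/-- With the true propensity score, local balance holds:
`E[T W Z ∣ p] = E[(1-T) W Z ∣ p] = E[Z ∣ p]` a.s. -/
theorem true_propensity_local_balance
    {Ω : Type*} [MeasurableSpace Ω] (μ : Measure Ω) [IsProbabilityMeasure μ]
    {M : ℕ} (Z : Ω → (Fin M → ℝ)) (hZ : Measurable Z)
    (T : Ω → ℝ) (hT : Measurable T) (hT01 : ∀ ω, T ω = 0 ∨ T ω = 1)
    (p : Ω → ℝ) (hp : p = μ[T | MeasurableSpace.comap Z inferInstance])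
    (hp01 : ∀ᵐ ω ∂μ, p ω ∈ Set.Ioo (0 : ℝ) 1)
    (W : Ω → ℝ) (hW : W = fun ω => 1 / (T ω * p ω + (1 - T ω) * (1 - p ω)))
    (hint1 : Integrable (fun ω => (∑ i, |Z ω i|) / p ω) μ)
    (hint0 : Integrable (fun ω => (∑ i, |Z ω i|) / (1 - p ω)) μ) :
    (μ[fun ω => (T ω * W ω) • Z ω | MeasurableSpace.comap p inferInstance]
      =ᵐ[μ] μ[Z | MeasurableSpace.comap p inferInstance]) ∧
    (μ[fun ω => ((1 - T ω) * W ω) • Z ω | MeasurableSpace.comap p inferInstance]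
      =ᵐ[μ] μ[Z | MeasurableSpace.comap p inferInstance]) := by
  have hmZ : MeasurableSpace.comap Z inferInstance ≤ ‹MeasurableSpace Ω› := hZ.comap_le
  have hpm : StronglyMeasurable[MeasurableSpace.comap Z inferInstance] p :=
    hp ▸ stronglyMeasurable_condExp
  have hmp := hpm.measurable.comap_le
  have hZm : StronglyMeasurable[MeasurableSpace.comap Z inferInstance] Z :=
    (comap_measurable Z).stronglyMeasurable
  have hT1 : ∀ ω, |T ω| ≤ 1 := fun ω => by rcases hT01 ω with h | h <;> simp [h]
  have hTint : Integrable T μ :=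
    .of_bound hT.aestronglyMeasurable 1 (.of_forall fun ω => (Real.norm_eq_abs _).trans_le (hT1 ω))
  have hW' := fun ω => congrFun hW ω ▸ mul_propensity_weight_eq_div (a := p ω) (hT01 ω)
  constructor
  · simp only [fun ω => (hW' ω).1]
    refine condExp_div_smul_eq_condExp_of_le hmp hmZ hTint hp.symm.eventuallyEq
      hpm.aestronglyMeasurable (hp01.mono fun ω h => h.1.ne') hZm.aestronglyMeasurable ?_
    exact integrable_div_smul_of_abs_le_one hT.aestronglyMeasurable hT1
      (hpm.mono hmZ).aestronglyMeasurable (hp01.mono fun ω h => h.1)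
      hZ.aestronglyMeasurable (fun ω => pi_norm_le_sum_abs (Z ω)) hint1
  · simp only [fun ω => (hW' ω).2]
    have h1T1 : ∀ ω, |1 - T ω| ≤ 1 := fun ω => by rcases hT01 ω with h | h <;> simp [h]
    have h1pm : StronglyMeasurable[MeasurableSpace.comap Z inferInstance] (fun ω => 1 - p ω) :=
      stronglyMeasurable_const.sub hpm
    refine condExp_div_smul_eq_condExp_of_le hmp hmZ (integrable_const 1 |>.sub hTint)
      (hp ▸ condExp_const_sub hmZ hTint 1) h1pm.aestronglyMeasurable
      (hp01.mono fun ω h => (sub_pos.2 h.2).ne') hZm.aestronglyMeasurable ?_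
    exact integrable_div_smul_of_abs_le_one (measurable_const.sub hT).aestronglyMeasurable h1T1
      (h1pm.mono hmZ).aestronglyMeasurable (hp01.mono fun ω h => sub_pos.2 h.2)
      hZ.aestronglyMeasurable (fun ω => pi_norm_le_sum_abs (Z ω)) hint0
end

section
/- If S = E[T | Z] (the propensity score itself), then S simultaneously satisfies both the local balance condition T ⊥ Z | S and the local calibration condition S = E[T | S] almost surely. -/
open MeasureTheory

/-- The propensity score `S = E[T ∣ Z]` simultaneously satisfies the local balance
condition `T ⊥ Z ∣ S` and the local calibration condition `S = E[T ∣ S]` a.s. -/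
theorem propensity_score_satisfies_both_conditions
    {Ω : Type*} [MeasurableSpace Ω] (μ : Measure Ω) [IsProbabilityMeasure μ]
    {M : ℕ} (Z : Ω → (Fin M → ℝ)) (hZ : Measurable Z)
    (T : Ω → ℝ) (hT : Measurable T) (hT01 : ∀ ω, T ω = 0 ∨ T ω = 1)
    (S : Ω → ℝ) (hS : S = μ[T | MeasurableSpace.comap Z inferInstance])
    (mS : MeasurableSpace Ω) (hmS : mS = MeasurableSpace.comap S inferInstance) :
    (∀ f : (Fin M → ℝ) → ℝ, Measurable f → (∃ C, ∀ x, |f x| ≤ C) →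
      μ[fun ω => T ω * f (Z ω) | mS]
        =ᵐ[μ] fun ω => (μ[T | mS]) ω * (μ[fun ω => f (Z ω) | mS]) ω) ∧
    μ[T | mS] =ᵐ[μ] S := by
  rename_i m0 _hp
  set mZ : MeasurableSpace Ω := MeasurableSpace.comap Z inferInstance with hmZ
  have hmZ_le : mZ ≤ m0 := hZ.comap_le
  have hS_smZ : StronglyMeasurable[mZ] S := hS ▸ stronglyMeasurable_condExp
  have hmS_le_mZ : mS ≤ mZ := hmS ▸ hS_smZ.measurable.comap_le
  have hmS_le : mS ≤ m0 := hmS_le_mZ.trans hmZ_le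
  have hS_smS : StronglyMeasurable[mS] S := by
    rw [hmS]
    exact Measurable.stronglyMeasurable (Measurable.of_comap_le le_rfl)
  -- T is integrable (bounded by 1)
  have hT_bd : ∀ ω, ‖T ω‖ ≤ 1 := by
    intro ω
    rcases hT01 ω with h | h <;> simp [h]
  have hT_int : Integrable T μ :=
    (integrable_const (1 : ℝ)).mono' hT.aestronglyMeasurable
      (Filter.Eventually.of_forall hT_bd)
  have hS_int : Integrable S μ := hS ▸ integrable_condExp
  -- calibration
  have hcal : μ[T | mS] =ᵐ[μ] S := by
    have h1 : μ[μ[T | mZ] | mS] =ᵐ[μ] μ[T | mS] :=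
      condExp_condExp_of_le hmS_le_mZ hmZ_le
    have h2 : μ[S | mS] = S := condExp_of_stronglyMeasurable hmS_le hS_smS hS_int
    calc μ[T | mS] =ᵐ[μ] μ[μ[T | mZ] | mS] := h1.symm
      _ = μ[S | mS] := by rw [← hS]
      _ = S := h2
  refine ⟨?_, hcal⟩
  intro f hf ⟨C, hC⟩
  have hfZ_sm : StronglyMeasurable[mZ] (fun ω => f (Z ω)) :=
    (hf.comp (Measurable.of_comap_le le_rfl)).stronglyMeasurable
  have hfZ_bd : ∀ᵐ ω ∂μ, ‖f (Z ω)‖ ≤ C :=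
    Filter.Eventually.of_forall fun ω => hC (Z ω)
  have hfZ_int : Integrable (fun ω => f (Z ω)) μ :=
    (integrable_const C).mono' (hf.comp hZ).aestronglyMeasurable hfZ_bd
  -- pull out f(Z) at level mZ
  have hpull1 : μ[(fun ω => f (Z ω)) * T | mZ]
      =ᵐ[μ] (fun ω => f (Z ω)) * μ[T | mZ] :=
    condExp_stronglyMeasurable_mul_of_bound hmZ_le hfZ_sm hT_int C hfZ_bd
  have htower : μ[μ[(fun ω => f (Z ω)) * T | mZ] | mS]
      =ᵐ[μ] μ[(fun ω => f (Z ω)) * T | mS] :=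
    condExp_condExp_of_le hmS_le_mZ hmZ_le
  have hS_bd : ∀ᵐ ω ∂μ, ‖S ω‖ ≤ 1 := by
    have h_le : μ[T | mZ] ≤ᵐ[μ] μ[(fun _ => (1:ℝ)) | mZ] :=
      condExp_mono hT_int (integrable_const 1)
        (Filter.Eventually.of_forall fun ω => by rcases hT01 ω with h | h <;> simp [h])
    have h_ge : μ[(fun _ => (0:ℝ)) | mZ] ≤ᵐ[μ] μ[T | mZ] :=
      condExp_mono (integrable_const 0) hT_int
        (Filter.Eventually.of_forall fun ω => by rcases hT01 ω with h | h <;> simp [h])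
    rw [condExp_const hmZ_le] at h_le h_ge
    rw [hS]
    filter_upwards [h_le, h_ge] with ω h1 h2
    rw [Real.norm_eq_abs, abs_le]
    exact ⟨by linarith [h2], h1⟩
  -- pull out S at level mS
  have hpull2 : μ[S * (fun ω => f (Z ω)) | mS]
      =ᵐ[μ] S * μ[(fun ω => f (Z ω)) | mS] :=
    condExp_stronglyMeasurable_mul_of_bound hmS_le hS_smS hfZ_int 1 hS_bd
  have key : μ[fun ω => T ω * f (Z ω) | mS]
      =ᵐ[μ] S * μ[(fun ω => f (Z ω)) | mS] := by
    have e1 : (fun ω => T ω * f (Z ω)) = (fun ω => f (Z ω)) * T := by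
      funext ω; exact mul_comm _ _
    rw [e1]
    calc μ[(fun ω => f (Z ω)) * T | mS]
        =ᵐ[μ] μ[μ[(fun ω => f (Z ω)) * T | mZ] | mS] := htower.symm
      _ =ᵐ[μ] μ[(fun ω => f (Z ω)) * μ[T | mZ] | mS] := condExp_congr_ae hpull1
      _ = μ[S * (fun ω => f (Z ω)) | mS] := by
          rw [← hS, mul_comm]
      _ =ᵐ[μ] S * μ[(fun ω => f (Z ω)) | mS] := hpull2
  filter_upwards [key, hcal] with ω hk hc
  simp only [Pi.mul_apply] at hk
  rw [hk, hc]
end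

section
/- If T ⊥ Z | S and (Y(1), Y(0)) ⊥ T | Z, with S = S(Z) a function of Z, then (Y(1), Y(0)) ⊥ T | S; that is, strong ignorability given covariates plus the balancing property implies strong ignorability given the balancing score. -/
open MeasureTheory

/-! Conditioning on the coarser balancing score first: the balancing property applied to
indicators of `σ(Z)`-sets shows that `E[T | S]` integrates like `T` over every such set, so
`E[T | S] = E[T | Z]`. Then by the tower property and pulling out the `σ(S)`-measurable factor,
`E[T g | S] = E[E[T | Z] E[g | Z] | S] = E[T | S] E[E[g | Z] | S] = E[T | S] E[g | S]`. -/

section CondExp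

variable {Ω : Type*} {m m' m₀ : MeasurableSpace Ω} {μ : Measure Ω} [IsFiniteMeasure μ]

lemma mul_indicator_one_eq_indicator (s : Set Ω) (X : Ω → ℝ) :
    X * s.indicator 1 = s.indicator X := by
  ext ω
  by_cases hω : ω ∈ s <;> simp [hω]

theorem condExp_ae_eq_condExp_of_condExp_mul_indicator_s19
    (hmm' : m ≤ m') (hm' : m' ≤ m₀) {X : Ω → ℝ} (hX : Integrable X μ)
    (h : ∀ s, MeasurableSet[m'] s →
      μ[X * s.indicator 1 | m] =ᵐ[μ] μ[X | m] * μ[s.indicator 1 | m]) :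
    μ[X | m] =ᵐ[μ] μ[X | m'] := by
  have hm : m ≤ m₀ := hmm'.trans hm'
  refine ae_eq_condExp_of_forall_setIntegral_eq hm' hX
    (fun _ _ _ => integrable_condExp.integrableOn) (fun s hs _ => ?_)
    (stronglyMeasurable_condExp.mono hmm').aestronglyMeasurable
  have hs₀ : MeasurableSet[m₀] s := hm' s hs
  have hind : Integrable (s.indicator (1 : Ω → ℝ)) μ :=
    (integrable_const 1).indicator hs₀
  calc ∫ ω in s, (μ[X | m]) ω ∂μ
      = ∫ ω, (μ[X | m] * s.indicator 1 : Ω → ℝ) ω ∂μ := by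
        rw [mul_indicator_one_eq_indicator, integral_indicator hs₀]
    _ = ∫ ω, (μ[μ[X | m] * s.indicator 1 | m]) ω ∂μ := (integral_condExp hm).symm
    _ = ∫ ω, (μ[X | m] * μ[s.indicator 1 | m] : Ω → ℝ) ω ∂μ := by
        refine integral_congr_ae (condExp_mul_of_stronglyMeasurable_left
          stronglyMeasurable_condExp ?_ hind)
        rw [mul_indicator_one_eq_indicator]
        exact integrable_condExp.indicator hs₀
    _ = ∫ ω, (μ[X * s.indicator 1 | m]) ω ∂μ := integral_congr_ae (h s hs).symm
    _ = ∫ ω in s, X ω ∂μ := by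
        rw [integral_condExp hm, mul_indicator_one_eq_indicator, integral_indicator hs₀]

theorem condExp_mul_ae_eq_of_condExp_ae_eq
    (hmm' : m ≤ m') (hm' : m' ≤ m₀) {X W : Ω → ℝ}
    (hX : μ[X | m] =ᵐ[μ] μ[X | m'])
    (hXW : μ[X * W | m'] =ᵐ[μ] μ[X | m'] * μ[W | m']) :
    μ[X * W | m] =ᵐ[μ] μ[X | m] * μ[W | m] := by
  have hfactor : μ[X * W | m'] =ᵐ[μ] μ[X | m] * μ[W | m'] :=
    hXW.trans (hX.symm.mul .rfl)
  calc μ[X * W | m]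
      =ᵐ[μ] μ[μ[X * W | m'] | m] := (condExp_condExp_of_le hmm' hm').symm
    _ =ᵐ[μ] μ[μ[X | m] * μ[W | m'] | m] := condExp_congr_ae hfactor
    _ =ᵐ[μ] μ[X | m] * μ[μ[W | m'] | m] :=
        condExp_mul_of_stronglyMeasurable_left stronglyMeasurable_condExp
          (integrable_condExp.congr hfactor) integrable_condExp
    _ =ᵐ[μ] μ[X | m] * μ[W | m] := Filter.EventuallyEq.rfl.mul (condExp_condExp_of_le hmm' hm')

end CondExp

/-- If `T ⊥ Z ∣ S` and `(Y(1), Y(0)) ⊥ T ∣ Z` with `S = S(Z)` a function of `Z`, then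
`(Y(1), Y(0)) ⊥ T ∣ S`: strong ignorability given covariates plus the balancing property
implies strong ignorability given the balancing score. -/
theorem ignorability_given_balancing_score
    {Ω : Type*} [MeasurableSpace Ω] (μ : Measure Ω) [IsProbabilityMeasure μ]
    {M : ℕ} (Z : Ω → (Fin M → ℝ)) (hZ : Measurable Z)
    (T : Ω → ℝ) (hT : Measurable T) (hT01 : ∀ ω, T ω = 0 ∨ T ω = 1)
    (Y1 Y0 : Ω → ℝ) (hY1 : Measurable Y1) (hY0 : Measurable Y0)
    (S : Ω → ℝ) (S0 : (Fin M → ℝ) → ℝ) (hS0 : Measurable S0)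
    (hSZ : S = fun ω => S0 (Z ω))
    (mS : MeasurableSpace Ω) (hmS : mS = MeasurableSpace.comap S inferInstance)
    (hbal : ∀ f : (Fin M → ℝ) → ℝ, Measurable f → (∃ C, ∀ x, |f x| ≤ C) →
      μ[fun ω => T ω * f (Z ω) | mS]
        =ᵐ[μ] fun ω => (μ[T | mS]) ω * (μ[fun ω => f (Z ω) | mS]) ω)
    (hignor : ∀ g : ℝ × ℝ → ℝ, Measurable g → (∃ C, ∀ x, |g x| ≤ C) →
      μ[fun ω => T ω * g (Y1 ω, Y0 ω) | MeasurableSpace.comap Z inferInstance]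
        =ᵐ[μ] fun ω => (μ[T | MeasurableSpace.comap Z inferInstance]) ω *
          (μ[fun ω => g (Y1 ω, Y0 ω) | MeasurableSpace.comap Z inferInstance]) ω) :
    ∀ g : ℝ × ℝ → ℝ, Measurable g → (∃ C, ∀ x, |g x| ≤ C) →
      μ[fun ω => T ω * g (Y1 ω, Y0 ω) | mS]
        =ᵐ[μ] fun ω => (μ[T | mS]) ω * (μ[fun ω => g (Y1 ω, Y0 ω) | mS]) ω := by
  intro g hg hg_bdd
  have hmSZ : mS ≤ MeasurableSpace.comap Z inferInstance := by
    rw [hmS, hSZ]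
    exact (hS0.comp (comap_measurable Z)).comap_le
  have hT_int : Integrable T μ :=
    .of_bound hT.aestronglyMeasurable 1 (.of_forall fun ω => by rcases hT01 ω with h | h <;> simp [h])
  have hT_cond : μ[T | mS] =ᵐ[μ] μ[T | MeasurableSpace.comap Z inferInstance] := by
    refine condExp_ae_eq_condExp_of_condExp_mul_indicator_s19 hmSZ hZ.comap_le hT_int ?_
    rintro _ ⟨B, hB, rfl⟩
    refine hbal (B.indicator 1) (measurable_one.indicator hB) ⟨1, fun x => ?_⟩
    by_cases hx : x ∈ B <;> simp [hx]
  exact condExp_mul_ae_eq_of_condExp_ae_eq (W := fun ω => g (Y1 ω, Y0 ω)) hmSZ hZ.comap_le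
    hT_cond (hignor g hg hg_bdd)
end
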